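/- Let n ≥ 7 and let t be an integer with 2 ≤ t ≤ ⌊(n−1)/2⌋ − 1, and set M := n − t − 2. Let F be a finite field of arbitrary characteristic, let V be a finite-dimensional F-vector space with dim V ≤ n − t − 3, and let A_1,…,A_M, B_1,…,B_{t+1}, C be subspaces of V. Then inequality (b) holds. -/
import Mathlib


open Finset

variable {F V : Type*} [Field F] [AddCommGroup V] [Module F V]

/-- `eH X` is the dimension of the subspace `X`, as an integer
(the "entropy" `H(X)` of the paper). -/
noncomputable def eH (X : Submodule F V) : ℤ := Module.finrank F X

/-- Left-hand side of inequality (a):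
`H(B_1,…,B_{t+1},A_{t+2},…,A_M) + (t+2)(M−t−1)·H(C)`. -/
noncomputable def lhsA (t M : ℕ) (A B : ℕ → Submodule F V) (C : Submodule F V) : ℤ :=
  eH ((∑ i ∈ Icc 1 (t+1), B i) + ∑ i ∈ Icc (t+2) M, A i)
    + ((t : ℤ) + 2) * ((M : ℤ) - t - 1) * eH C

/-- Right-hand side of inequality (a):
`(M−1)·I(A_1+⋯+A_M ; C) + (t+2)·Σ_{i=t+2}^{M} H(A_i)
 + ((t+2)(M−t)−1)·( H(C | A_1,…,A_M) + Σ_{i=1}^{M} I(Σ_{j≠i} A_j ; C) )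
 + Σ_{i=1}^{t+1} ( H(B_i | A_j : j≠i) + H(B_i | A_i, C)
      + I(A_1+⋯+A_i ; A_{i+1}+⋯+A_{t+1}) + I(A_1+⋯+A_{i−1} ; A_i) )`. -/
noncomputable def rhsA (t M : ℕ) (A B : ℕ → Submodule F V) (C : Submodule F V) : ℤ :=
  ((M : ℤ) - 1) * eH ((∑ i ∈ Icc 1 M, A i) ⊓ C)
  + ((t : ℤ) + 2) * ∑ i ∈ Icc (t+2) M, eH (A i)
  + (((t : ℤ) + 2) * ((M : ℤ) - t) - 1) *
      ((eH (C + ∑ i ∈ Icc 1 M, A i) - eH (∑ i ∈ Icc 1 M, A i))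
        + ∑ i ∈ Icc 1 M, eH ((∑ j ∈ (Icc 1 M).erase i, A j) ⊓ C))
  + ∑ i ∈ Icc 1 (t+1),
      ((eH (B i + ∑ j ∈ (Icc 1 M).erase i, A j) - eH (∑ j ∈ (Icc 1 M).erase i, A j))
        + (eH (B i + (A i + C)) - eH (A i + C))
        + eH ((∑ j ∈ Icc 1 i, A j) ⊓ (∑ j ∈ Icc (i+1) (t+1), A j))
        + eH ((∑ j ∈ Icc 1 (i-1), A j) ⊓ A i))

/-- Inequality (a) of the paper. -/
def IneqA (t M : ℕ) (A B : ℕ → Submodule F V) (C : Submodule F V) : Prop :=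
  lhsA t M A B C ≤ rhsA t M A B C

/-- Left-hand side of inequality (b): `M·H(C)`. -/
noncomputable def lhsB (t M : ℕ) (A B : ℕ → Submodule F V) (C : Submodule F V) : ℤ :=
  (M : ℤ) * eH C

/-- Right-hand side of the `M`-scaled inequality (b):
`H(B_1,…,B_{t+1},A_{t+2},…,A_M)
 + M·( H(C | A_1,…,A_M) + Σ_{i=1}^{M} I(Σ_{j≠i} A_j ; C)
    + Σ_{i=2}^{t+1} I(A_1+⋯+A_{i−1} ; A_i)
    + Σ_{i=1}^{t+1} ( H(C | A_i, B_i) + H(B_i | A_j : j≠i)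
        + I(A_1+⋯+A_i ; A_{i+1}+⋯+A_M) ) )`. -/
noncomputable def rhsB (t M : ℕ) (A B : ℕ → Submodule F V) (C : Submodule F V) : ℤ :=
  eH ((∑ i ∈ Icc 1 (t+1), B i) + ∑ i ∈ Icc (t+2) M, A i)
  + (M : ℤ) *
      ((eH (C + ∑ i ∈ Icc 1 M, A i) - eH (∑ i ∈ Icc 1 M, A i))
        + ∑ i ∈ Icc 1 M, eH ((∑ j ∈ (Icc 1 M).erase i, A j) ⊓ C)
        + ∑ i ∈ Icc 2 (t+1), eH ((∑ j ∈ Icc 1 (i-1), A j) ⊓ A i)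
        + ∑ i ∈ Icc 1 (t+1),
            ((eH (C + (A i + B i)) - eH (A i + B i))
              + (eH (B i + ∑ j ∈ (Icc 1 M).erase i, A j) - eH (∑ j ∈ (Icc 1 M).erase i, A j))
              + eH ((∑ j ∈ Icc 1 i, A j) ⊓ (∑ j ∈ Icc (i+1) M, A j))))

/-- Inequality (b) of the paper (in `M`-scaled form). -/
def IneqB (t M : ℕ) (A B : ℕ → Submodule F V) (C : Submodule F V) : Prop :=
  lhsB t M A B C ≤ rhsB t M A B C

section Aux

variable {F V : Type*} [Field F] [AddCommGroup V] [Module F V]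

lemma eH_nonneg (X : Submodule F V) : 0 ≤ eH X := by
  unfold eH; positivity

lemma eH_mono [FiniteDimensional F V] {X Y : Submodule F V} (h : X ≤ Y) : eH X ≤ eH Y := by
  unfold eH
  exact_mod_cast Submodule.finrank_mono h

lemma cond_nonneg [FiniteDimensional F V] (X Y : Submodule F V) :
    0 ≤ eH (X + Y) - eH Y := by
  have : Y ≤ X + Y := by rw [Submodule.add_eq_sup]; exact le_sup_right
  linarith [eH_mono this]

lemma sum_mono_subset {s t : Finset ℕ} (A : ℕ → Submodule F V) (h : s ⊆ t) :
    ∑ j ∈ s, A j ≤ ∑ j ∈ t, A j := by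
  rw [← Finset.sum_sdiff h, Submodule.add_eq_sup]
  exact le_sup_right

lemma card_le_finrank_sum [FiniteDimensional F V] (A : ℕ → Submodule F V) (s : Finset ℕ)
    (h : ∀ i ∈ s, ¬ A i ≤ ∑ j ∈ s.erase i, A j) :
    s.card ≤ Module.finrank F (∑ i ∈ s, A i : Submodule F V) := by
  induction s using Finset.induction with
  | empty => simp
  | @insert a s ha ih =>
    have hs : ∀ i ∈ s, ¬ A i ≤ ∑ j ∈ s.erase i, A j := by
      intro i hi hcon
      refine h i (Finset.mem_insert_of_mem hi) (le_trans hcon ?_)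
      exact sum_mono_subset A (fun x hx => by
        simp only [Finset.mem_erase] at hx ⊢
        exact ⟨hx.1, Finset.mem_insert_of_mem hx.2⟩)
    have hna : ¬ A a ≤ ∑ j ∈ s, A j := by
      have := h a (Finset.mem_insert_self a s)
      rwa [Finset.erase_insert ha] at this
    rw [Finset.sum_insert ha, Finset.card_insert_of_notMem ha]
    have hlt : (∑ j ∈ s, A j) < A a + ∑ j ∈ s, A j := by
      rw [Submodule.add_eq_sup]
      exact lt_of_le_of_ne le_sup_right (fun he => hna (he ▸ le_sup_left))
    have := Submodule.finrank_lt_finrank_of_lt hlt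
    have := ih hs
    omega

lemma exists_dep [FiniteDimensional F V] (A : ℕ → Submodule F V) (s : Finset ℕ)
    (h : Module.finrank F V < s.card) :
    ∃ i ∈ s, A i ≤ ∑ j ∈ s.erase i, A j := by
  by_contra hc
  push_neg at hc
  have h1 := card_le_finrank_sum A s hc
  have h2 : Module.finrank F (∑ i ∈ s, A i : Submodule F V) ≤ Module.finrank F V :=
    Submodule.finrank_le _
  omega

end Aux

/-- If `dim V ≤ n − t − 3`, inequality (b) holds over any finite field,
regardless of the characteristic. -/
theorem ineqB_of_small_dim (n t M : ℕ) (hn : 7 ≤ n) (ht2 : 2 ≤ t)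
    (ht : t ≤ (n - 1) / 2 - 1) (hM : M = n - t - 2)
    (F V : Type*) [Field F] [Fintype F] [AddCommGroup V] [Module F V]
    [FiniteDimensional F V] (hdim : Module.finrank F V ≤ n - t - 3)
    (A B : ℕ → Submodule F V) (C : Submodule F V) :
    IneqB t M A B C := by
  have hMfr : Module.finrank F V < (Icc 1 M).card := by
    rw [Nat.card_Icc]; omega
  obtain ⟨i₀, hi₀, hle⟩ := exists_dep A (Icc 1 M) hMfr
  unfold IneqB lhsB rhsB
  set S : Submodule F V := ∑ i ∈ Icc 1 M, A i with hS
  have hSS : S = ∑ j ∈ (Icc 1 M).erase i₀, A j := by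
    rw [hS, ← Finset.add_sum_erase _ A hi₀, Submodule.add_eq_sup, sup_eq_right.mpr hle]
  -- X1 + X2 ≥ eH C
  have hform : eH (C + S) + eH (C ⊓ S) = eH C + eH S := by
    unfold eH
    rw [Submodule.add_eq_sup]
    exact_mod_cast Submodule.finrank_sup_add_finrank_inf_eq C S
  have hsingle : eH ((∑ j ∈ (Icc 1 M).erase i₀, A j) ⊓ C) ≤
      ∑ i ∈ Icc 1 M, eH ((∑ j ∈ (Icc 1 M).erase i, A j) ⊓ C) :=
    Finset.single_le_sum (f := fun i => eH ((∑ j ∈ (Icc 1 M).erase i, A j) ⊓ C))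
      (fun i _ => eH_nonneg _) hi₀
  have hX12 : eH C ≤ (eH (C + S) - eH S) + ∑ i ∈ Icc 1 M, eH ((∑ j ∈ (Icc 1 M).erase i, A j) ⊓ C) := by
    have : eH ((∑ j ∈ (Icc 1 M).erase i₀, A j) ⊓ C) = eH (C ⊓ S) := by
      rw [← hSS, inf_comm]
    linarith
  have hX3 : 0 ≤ ∑ i ∈ Icc 2 (t+1), eH ((∑ j ∈ Icc 1 (i-1), A j) ⊓ A i) :=
    Finset.sum_nonneg fun i _ => eH_nonneg _
  have hX4 : 0 ≤ ∑ i ∈ Icc 1 (t+1),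
      ((eH (C + (A i + B i)) - eH (A i + B i))
        + (eH (B i + ∑ j ∈ (Icc 1 M).erase i, A j) - eH (∑ j ∈ (Icc 1 M).erase i, A j))
        + eH ((∑ j ∈ Icc 1 i, A j) ⊓ (∑ j ∈ Icc (i+1) M, A j))) :=
    Finset.sum_nonneg fun i _ => by
      have h1 := cond_nonneg C (A i + B i)
      have h2 := cond_nonneg (B i) (∑ j ∈ (Icc 1 M).erase i, A j)
      have h3 := eH_nonneg ((∑ j ∈ Icc 1 i, A j) ⊓ (∑ j ∈ Icc (i+1) M, A j))
      linarith
  have hB0 : 0 ≤ eH ((∑ i ∈ Icc 1 (t+1), B i) + ∑ i ∈ Icc (t+2) M, A i) := eH_nonneg _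
  have hM0 : (0 : ℤ) ≤ (M : ℤ) := Int.natCast_nonneg M
  nlinarith [mul_le_mul_of_nonneg_left (by linarith : eH C ≤
    (eH (C + S) - eH S) + ∑ i ∈ Icc 1 M, eH ((∑ j ∈ (Icc 1 M).erase i, A j) ⊓ C)
      + ∑ i ∈ Icc 2 (t+1), eH ((∑ j ∈ Icc 1 (i-1), A j) ⊓ A i)
      + ∑ i ∈ Icc 1 (t+1),
        ((eH (C + (A i + B i)) - eH (A i + B i))
          + (eH (B i + ∑ j ∈ (Icc 1 M).erase i, A j) - eH (∑ j ∈ (Icc 1 M).erase i, A j))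
          + eH ((∑ j ∈ Icc 1 i, A j) ⊓ (∑ j ∈ Icc (i+1) M, A j)))) hM0]
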